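/- Local minimality test for blocker sets: let Π be a normal logic program over atoms 𝒜 and let C ⊆ 𝒜 be a blocker set of Π, i.e., AS(omit(Π, 𝒜\C)) = ∅. If for every c ∈ C the program omit(Π, 𝒜\(C\{c})) has some answer set, then C is ⊂-minimal, i.e., for every C' ⊂ C the program omit(Π, 𝒜\C') has some answer set. -/

import Mathlib

universe u

namespace ASP

/-- The head of a rule: falsity `⊥` (a constraint), a plain atom head,
or a choice head `{a}` (the common syntactic extension). -/
inductive Head (α : Type u) : Type u where
  | bot : Head α
  | atom : α → Head α
  | choice : α → Head α

/-- A (ground) rule with a head, a positive body `B⁺` and a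
(default-)negated body `B⁻`. -/
structure Rule (α : Type u) : Type u where
  head : Head α
  pos : Set α
  neg : Set α

/-- A (ground, propositional) program is a set of rules. -/
abbrev Program (α : Type u) : Type u := Set (Rule α)

def Head.atoms {α : Type u} : Head α → Set α
  | .bot => ∅
  | .atom a => {a}
  | .choice a => {a}

/-- `B±(r) = B⁺(r) ∪ B⁻(r)`. -/
def Rule.bodyAtoms {α : Type u} (r : Rule α) : Set α :=
  r.pos ∪ r.neg

def Rule.atoms {α : Type u} (r : Rule α) : Set α :=
  r.head.atoms ∪ r.bodyAtoms

/-- The program `P` uses only atoms from `𝒜`. -/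
def ProgramOver {α : Type u} (P : Program α) (𝒜 : Set α) : Prop :=
  ∀ r ∈ P, r.atoms ⊆ 𝒜

/-- A normal program: every head is an atom or `⊥` (no genuine choice heads). -/
def IsNormal {α : Type u} (P : Program α) : Prop :=
  ∀ r ∈ P, ∀ a : α, r.head ≠ Head.choice a

/-- `I ⊨ B(r)`, i.e. `B⁺(r) ⊆ I` and `B⁻(r) ∩ I = ∅`. -/
def bodySat {α : Type u} (I : Set α) (r : Rule α) : Prop :=
  r.pos ⊆ I ∧ ∀ a ∈ r.neg, a ∉ I

def headSat {α : Type u} (I : Set α) : Head α → Prop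
  | .bot => False
  | .atom a => a ∈ I
  | .choice _ => True

def isModel {α : Type u} (I : Set α) (P : Program α) : Prop :=
  ∀ r ∈ P, bodySat I r → headSat I r.head

/-- Satisfaction by `J` of the head of a rule of the FLP-reduct `P^I`.
A choice head `{a}` abbreviates the pair of rules `a ← B, not ā` and
`ā ← B, not a` for a fresh complement atom `ā`; projected onto the original
atoms this amounts to the condition `a ∈ I → a ∈ J`. -/
def headSatReduct {α : Type u} (I J : Set α) : Head α → Prop
  | .bot => False
  | .atom a => a ∈ J
  | .choice a => a ∈ I → a ∈ J

/-- `J` is a model of the FLP-reduct `P^I = {r ∈ P | I ⊨ B(r)}`. -/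
def satReduct {α : Type u} (J I : Set α) (P : Program α) : Prop :=
  ∀ r ∈ P, bodySat I r → bodySat J r → headSatReduct I J r.head

/-- `I` is an answer set of `P` iff `I` is a `⊆`-minimal model of the
FLP-reduct `P^I` (note that `I ⊨ P^I` iff `I ⊨ P`). -/
def isAnswerSet {α : Type u} (P : Program α) (I : Set α) : Prop :=
  isModel I P ∧ ∀ J ⊆ I, satReduct J I P → J = I

/-- `AS(P)`, the collection of answer sets of `P`. -/
def AS {α : Type u} (P : Program α) : Set (Set α) :=
  {I | isAnswerSet P I}

/-- The head is omitted, i.e. it is an atom (or choice atom) belonging to `A`;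
`⊥` is never in a set of omitted *atoms*. -/
def Head.omitted {α : Type u} (A : Set α) : Head α → Prop
  | .bot => False
  | .atom a => a ∈ A
  | .choice a => a ∈ A

def Head.toChoice {α : Type u} : Head α → Head α
  | .bot => .bot
  | .atom a => .choice a
  | .choice a => .choice a

/-- How a single rule `r` of the program is transformed into a rule `r'` of the
abstraction when the atoms in `A` are omitted:
(a) `r` is kept unchanged if it contains no omitted atom;
(b) if the body contains an omitted atom but the head is not omitted and not `⊥`,
the body is projected to the remaining atoms and the head becomes a choice;
(c) otherwise the rule is deleted (no `r'` is produced). -/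
def omitRel {α : Type u} (A : Set α) (r r' : Rule α) : Prop :=
  (r.bodyAtoms ∩ A = ∅ ∧ ¬ Head.omitted A r.head ∧ r' = r) ∨
  (r.bodyAtoms ∩ A ≠ ∅ ∧ ¬ Head.omitted A r.head ∧ r.head ≠ Head.bot ∧
    r' = ⟨Head.toChoice r.head, r.pos \ A, r.neg \ A⟩)

/-- The omission abstraction `omit(P, A)`. -/
def omitA {α : Type u} (P : Program α) (A : Set α) : Program α :=
  {r' | ∃ r ∈ P, omitRel A r r'}


lemma Head.omitted_toChoice {α : Type u} (B : Set α) (h : Head α) :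
    Head.omitted B (Head.toChoice h) ↔ Head.omitted B h := by
  cases h <;> simp [Head.toChoice, Head.omitted]

lemma Head.toChoice_toChoice {α : Type u} (h : Head α) :
    Head.toChoice (Head.toChoice h) = Head.toChoice h := by
  cases h <;> rfl

lemma Head.omitted_mono {α : Type u} {A B : Set α} (hAB : A ⊆ B) {h : Head α}
    (hh : Head.omitted A h) : Head.omitted B h := by
  cases h <;> simp [Head.omitted] at * <;> exact hAB hh

lemma diff_eq_of_inter_empty {α : Type u} {A B S : Set α} (hAB : A ⊆ B)
    (h : (S \ A) ∩ B = ∅) : S \ A = S \ B := by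
  ext x
  constructor
  · rintro ⟨hS, hA⟩
    refine ⟨hS, fun hB => ?_⟩
    exact (Set.eq_empty_iff_forall_notMem.mp h x ⟨⟨hS, hA⟩, hB⟩).elim
  · rintro ⟨hS, hB⟩
    exact ⟨hS, fun hA => hB (hAB hA)⟩

lemma diff_diff_of_subset {α : Type u} {A B S : Set α} (hAB : A ⊆ B) :
    (S \ A) \ B = S \ B := by
  ext x; constructor
  · rintro ⟨⟨hS, _⟩, hB⟩; exact ⟨hS, hB⟩
  · rintro ⟨hS, hB⟩; exact ⟨⟨hS, fun hA => hB (hAB hA)⟩, hB⟩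

/-- Composition of omissions: omitting `A ⊆ B` first and then `B` is the same
as omitting `B` directly. -/
lemma omit_omit {α : Type u} (P : Program α) (A B : Set α) (hAB : A ⊆ B) :
    omitA (omitA P A) B = omitA P B := by
  ext r''
  constructor
  · rintro ⟨r', ⟨r, hrP, hrel1⟩, hrel2⟩
    refine ⟨r, hrP, ?_⟩
    rcases hrel1 with ⟨hd1, hn1, rfl⟩ | ⟨hd1, hn1, hb1, rfl⟩
    · rcases hrel2 with ⟨hd2, hn2, rfl⟩ | ⟨hd2, hn2, hb2, rfl⟩
      · exact Or.inl ⟨hd2, hn2, rfl⟩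
      · exact Or.inr ⟨hd2, hn2, hb2, rfl⟩
    · -- r' = ⟨toChoice r.head, pos\A, neg\A⟩
      have hbodysub : r.bodyAtoms ∩ A ⊆ r.bodyAtoms ∩ B :=
        Set.inter_subset_inter_right _ hAB
      have hdB : r.bodyAtoms ∩ B ≠ ∅ := by
        intro hE
        exact hd1 (Set.subset_empty_iff.mp (hE ▸ hbodysub))
      rcases hrel2 with ⟨hd2, hn2, rfl⟩ | ⟨hd2, hn2, hb2, rfl⟩
      · -- kept unchanged in second step; body of r' disjoint from B
        have hbody : ((r.pos \ A) ∪ (r.neg \ A)) ∩ B = ∅ := hd2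
        have hpos : r.pos \ A = r.pos \ B := by
          apply diff_eq_of_inter_empty hAB
          apply Set.eq_empty_iff_forall_notMem.mpr
          intro x ⟨hx, hxB⟩
          exact Set.eq_empty_iff_forall_notMem.mp hbody x ⟨Or.inl hx, hxB⟩
        have hneg : r.neg \ A = r.neg \ B := by
          apply diff_eq_of_inter_empty hAB
          apply Set.eq_empty_iff_forall_notMem.mpr
          intro x ⟨hx, hxB⟩
          exact Set.eq_empty_iff_forall_notMem.mp hbody x ⟨Or.inr hx, hxB⟩
        refine Or.inr ⟨hdB, ?_, hb1, ?_⟩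
        · intro h; exact hn2 ((Head.omitted_toChoice B r.head).mpr h)
        · rw [hpos, hneg]
      · refine Or.inr ⟨hdB, ?_, hb1, ?_⟩
        · intro h; exact hn2 ((Head.omitted_toChoice B r.head).mpr h)
        · show (⟨Head.toChoice (Head.toChoice r.head), (r.pos \ A) \ B,
              (r.neg \ A) \ B⟩ : Rule α) = _
          rw [Head.toChoice_toChoice, diff_diff_of_subset hAB, diff_diff_of_subset hAB]
  · rintro ⟨r, hrP, hrel⟩
    rcases hrel with ⟨hd, hn, rfl⟩ | ⟨hd, hn, hb, rfl⟩
    · -- no B-atoms at all: kept in both steps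
      have hdA : r''.bodyAtoms ∩ A = ∅ := by
        apply Set.eq_empty_iff_forall_notMem.mpr
        intro x ⟨hx, hxA⟩
        exact Set.eq_empty_iff_forall_notMem.mp hd x ⟨hx, hAB hxA⟩
      have hnA : ¬ Head.omitted A r''.head := fun h => hn (Head.omitted_mono hAB h)
      exact ⟨r'', ⟨r'', hrP, Or.inl ⟨hdA, hnA, rfl⟩⟩, Or.inl ⟨hd, hn, rfl⟩⟩
    · have hnA : ¬ Head.omitted A r.head := fun h => hn (Head.omitted_mono hAB h)
      by_cases hdA : r.bodyAtoms ∩ A = ∅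
      · -- kept in first step, transformed in second
        exact ⟨r, ⟨r, hrP, Or.inl ⟨hdA, hnA, rfl⟩⟩, Or.inr ⟨hd, hn, hb, rfl⟩⟩
      · -- transformed in first step
        refine ⟨⟨Head.toChoice r.head, r.pos \ A, r.neg \ A⟩,
          ⟨r, hrP, Or.inr ⟨hdA, hnA, hb, rfl⟩⟩, ?_⟩
        set r' : Rule α := ⟨Head.toChoice r.head, r.pos \ A, r.neg \ A⟩
        have hn' : ¬ Head.omitted B r'.head := by
          show ¬ Head.omitted B (Head.toChoice r.head)
          rw [Head.omitted_toChoice]; exact hn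
        by_cases hdB : r'.bodyAtoms ∩ B = ∅
        · refine Or.inl ⟨hdB, hn', ?_⟩
          have hbody : ((r.pos \ A) ∪ (r.neg \ A)) ∩ B = ∅ := hdB
          have hpos : r.pos \ A = r.pos \ B := by
            apply diff_eq_of_inter_empty hAB
            apply Set.eq_empty_iff_forall_notMem.mpr
            intro x ⟨hx, hxB⟩
            exact Set.eq_empty_iff_forall_notMem.mp hbody x ⟨Or.inl hx, hxB⟩
          have hneg : r.neg \ A = r.neg \ B := by
            apply diff_eq_of_inter_empty hAB
            apply Set.eq_empty_iff_forall_notMem.mpr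
            intro x ⟨hx, hxB⟩
            exact Set.eq_empty_iff_forall_notMem.mp hbody x ⟨Or.inr hx, hxB⟩
          show (⟨Head.toChoice r.head, r.pos \ B, r.neg \ B⟩ : Rule α) = r'
          rw [show r' = ⟨Head.toChoice r.head, r.pos \ A, r.neg \ A⟩ from rfl, hpos, hneg]
        · refine Or.inr ⟨hdB, hn', ?_, ?_⟩
          · show Head.toChoice r.head ≠ Head.bot
            cases hh : r.head <;> simp [Head.toChoice]
            exact absurd hh hb
          · show _ = (⟨Head.toChoice r'.head, r'.pos \ B, r'.neg \ B⟩ : Rule α)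
            show (⟨Head.toChoice r.head, r.pos \ B, r.neg \ B⟩ : Rule α) = _
            show _ = (⟨Head.toChoice (Head.toChoice r.head), (r.pos \ A) \ B,
              (r.neg \ A) \ B⟩ : Rule α)
            rw [Head.toChoice_toChoice, diff_diff_of_subset hAB, diff_diff_of_subset hAB]

/-- Over-approximation: every answer set of `Q`, projected onto the
non-omitted atoms, is an answer set of `omit(Q, A)`. -/
lemma project_AS {α : Type u} (Q : Program α) (A I : Set α)
    (hI : isAnswerSet Q I) : isAnswerSet (omitA Q A) (I \ A) := by
  obtain ⟨hmod, hmin⟩ := hI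
  constructor
  · -- I \ A is a model of omit(Q, A)
    rintro r' ⟨r, hr, hrel⟩ hbs
    rcases hrel with ⟨hdisj, hnom, heq⟩ | ⟨hnd, hnom, hnb, heq⟩
    · subst heq
      have hbsI : bodySat I r' := by
        refine ⟨hbs.1.trans Set.diff_subset, fun a ha haI => ?_⟩
        have haA : a ∉ A := fun h =>
          Set.eq_empty_iff_forall_notMem.mp hdisj a ⟨Or.inr ha, h⟩
        exact hbs.2 a ha ⟨haI, haA⟩
      have hhead := hmod r' hr hbsI
      cases hh : r'.head with
      | bot => rw [hh] at hhead; exact hhead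
      | atom a =>
        rw [hh] at hhead hnom
        exact ⟨hhead, fun h => hnom h⟩
      | choice a => trivial
    · subst heq
      -- choice head: trivially satisfied
      cases hh : r.head with
      | bot => exact absurd hh hnb
      | atom a => exact trivial
      | choice a => exact trivial
  · -- minimality
    intro J hJ hsr
    set K := J ∪ (I ∩ A) with hK
    have hJI : J ⊆ I := hJ.trans Set.diff_subset
    have hKI : K ⊆ I := Set.union_subset hJI Set.inter_subset_left
    have hKred : satReduct K I Q := by
      intro r hr hbI hbK
      have hhead := hmod r hr hbI
      by_cases hom : Head.omitted A r.head
      · cases hh : r.head with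
        | bot => rw [hh] at hhead; exact hhead
        | atom a =>
          rw [hh] at hhead hom
          exact Or.inr ⟨hhead, hom⟩
        | choice a =>
          rw [hh] at hom
          exact fun haI => Or.inr ⟨haI, hom⟩
      · have hposK : r.pos ⊆ K := hbK.1
        by_cases hbd : r.bodyAtoms ∩ A = ∅
        · -- rule kept unchanged in the abstraction
          have hr' : r ∈ omitA Q A := ⟨r, hr, Or.inl ⟨hbd, hom, rfl⟩⟩
          have hposA : ∀ x ∈ r.pos, x ∉ A := fun x hx hxA =>
            Set.eq_empty_iff_forall_notMem.mp hbd x ⟨Or.inl hx, hxA⟩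
          have hnegA : ∀ x ∈ r.neg, x ∉ A := fun x hx hxA =>
            Set.eq_empty_iff_forall_notMem.mp hbd x ⟨Or.inr hx, hxA⟩
          have hbJ0 : bodySat (I \ A) r :=
            ⟨fun x hx => ⟨hbI.1 hx, hposA x hx⟩,
             fun a ha haIA => hbI.2 a ha haIA.1⟩
          have hbJ : bodySat J r := by
            refine ⟨fun x hx => ?_, fun a ha haJ => hbI.2 a ha (hJI haJ)⟩
            rcases hposK hx with h | h
            · exact h
            · exact absurd h.2 (hposA x hx)
          have hred := hsr r hr' hbJ0 hbJ
          cases hh : r.head with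
          | bot => rw [hh] at hred; exact hred
          | atom a =>
            rw [hh] at hred
            exact Or.inl hred
          | choice a =>
            rw [hh] at hred
            intro haI
            by_cases haA : a ∈ A
            · exact Or.inr ⟨haI, haA⟩
            · exact Or.inl (hred ⟨haI, haA⟩)
        · -- rule transformed into a choice rule
          cases hh : r.head with
          | bot => rw [hh] at hhead; exact hhead
          | atom a =>
            have hnb : r.head ≠ Head.bot := by rw [hh]; intro h; cases h
            have hr' : (⟨Head.toChoice r.head, r.pos \ A, r.neg \ A⟩ : Rule α) ∈ omitA Q A :=
              ⟨r, hr, Or.inr ⟨hbd, hom, hnb, rfl⟩⟩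
            have hbJ0 : bodySat (I \ A) (⟨Head.toChoice r.head, r.pos \ A, r.neg \ A⟩ : Rule α) :=
              ⟨fun x hx => ⟨hbI.1 hx.1, hx.2⟩, fun b hb hbIA => hbI.2 b hb.1 hbIA.1⟩
            have hbJ : bodySat J (⟨Head.toChoice r.head, r.pos \ A, r.neg \ A⟩ : Rule α) := by
              refine ⟨fun x hx => ?_, fun b hb hbJ => hbI.2 b hb.1 (hJI hbJ)⟩
              rcases hposK hx.1 with h | h
              · exact h
              · exact absurd h.2 hx.2
            have hred := hsr _ hr' hbJ0 hbJ
            rw [hh] at hred hhead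
            simp only [Head.toChoice] at hred
            by_cases haA : a ∈ A
            · exact Or.inr ⟨hhead, haA⟩
            · exact Or.inl (hred ⟨hhead, haA⟩)
          | choice a =>
            have hnb : r.head ≠ Head.bot := by rw [hh]; intro h; cases h
            have hr' : (⟨Head.toChoice r.head, r.pos \ A, r.neg \ A⟩ : Rule α) ∈ omitA Q A :=
              ⟨r, hr, Or.inr ⟨hbd, hom, hnb, rfl⟩⟩
            have hbJ0 : bodySat (I \ A) (⟨Head.toChoice r.head, r.pos \ A, r.neg \ A⟩ : Rule α) :=
              ⟨fun x hx => ⟨hbI.1 hx.1, hx.2⟩, fun b hb hbIA => hbI.2 b hb.1 hbIA.1⟩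
            have hbJ : bodySat J (⟨Head.toChoice r.head, r.pos \ A, r.neg \ A⟩ : Rule α) := by
              refine ⟨fun x hx => ?_, fun b hb hbJ => hbI.2 b hb.1 (hJI hbJ)⟩
              rcases hposK hx.1 with h | h
              · exact h
              · exact absurd h.2 hx.2
            have hred := hsr _ hr' hbJ0 hbJ
            rw [hh] at hred
            simp only [Head.toChoice] at hred
            intro haI
            by_cases haA : a ∈ A
            · exact Or.inr ⟨haI, haA⟩
            · exact Or.inl (hred ⟨haI, haA⟩)
    have hKeq : K = I := hmin K hKI hKred
    apply Set.Subset.antisymm hJ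
    intro x hx
    have hxK : x ∈ K := hKeq ▸ hx.1
    rcases hxK with h | h
    · exact h
    · exact absurd h.2 hx.2

/-- local minimality test for blocker sets: let `C ⊆ 𝒜` be a
blocker set of `P`, i.e. `AS(omit(P, 𝒜 \ C)) = ∅`. If for every `c ∈ C` the
program `omit(P, 𝒜 \ (C \ {c}))` has some answer set, then `C` is `⊂`-minimal:
for every `C' ⊂ C`, the program `omit(P, 𝒜 \ C')` has some answer set. -/
theorem blocker_local_minimality {α : Type u} (P : Program α) (𝒜 C : Set α)
    (h𝒜 : 𝒜.Finite) (hnorm : IsNormal P) (hP : ProgramOver P 𝒜)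
    (hC : C ⊆ 𝒜)
    (hblock : AS (omitA P (𝒜 \ C)) = ∅)
    (hloc : ∀ c ∈ C, AS (omitA P (𝒜 \ (C \ {c}))) ≠ ∅) :
    ∀ C' ⊂ C, AS (omitA P (𝒜 \ C')) ≠ ∅ := by
  intro C' hC'
  obtain ⟨hsub, hne⟩ := hC'
  obtain ⟨c, hcC, hcC'⟩ : ∃ c, c ∈ C ∧ c ∉ C' := by
    by_contra h
    push_neg at h
    exact hne (fun x hx => h x hx)
  have hsub2 : 𝒜 \ (C \ {c}) ⊆ 𝒜 \ C' := by
    apply Set.diff_subset_diff_right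
    intro x hx
    exact ⟨hsub hx, fun hxc => hcC' (hxc ▸ hx)⟩
  obtain ⟨I, hI⟩ := Set.nonempty_iff_ne_empty.mpr (hloc c hcC)
  have hproj := project_AS (omitA P (𝒜 \ (C \ {c}))) (𝒜 \ C') I hI
  rw [← Set.nonempty_iff_ne_empty]
  refine ⟨I \ (𝒜 \ C'), ?_⟩
  show isAnswerSet (omitA P (𝒜 \ C')) (I \ (𝒜 \ C'))
  rw [← omit_omit P (𝒜 \ (C \ {c})) (𝒜 \ C') hsub2]
  exact hproj

end ASP
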